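/- Let P₁ and P₂ be finite partially ordered sets with p₁ and p₂ elements, and for j = 1, 2 let V_j ∈ ℝ^{p_j × q_j} be a matrix whose columns v_j^{(1)},…,v_j^{(q_j)} satisfy: C(P_j) equals the set of nonnegative linear combinations of the columns of V_j. Let T ∈ ℝ^{p₁ × p₂} be a matrix admitting a factorization T = ∑_{i=1}^m a_i b_iᵀ with a_i ∈ C(P₁) and b_i ∈ C(P₂). Then for every r ∈ ℕ, T admits such a factorization with r terms if and only if there exists an entrywise-nonnegative matrix H ∈ ℝ^{q₁ × q₂} with T = V₁ H V₂ᵀ and nonnegative rank of H at most r. Consequently, the ND rank of T equals the minimum of rank₊(H) over all entrywise-nonnegative H with T = V₁ H V₂ᵀ. -/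
import Mathlib


/-- The order cone of a finite poset: nonnegative, nondecreasing real-valued functions. -/
def orderCone (P : Type*) [PartialOrder P] : Set (P → ℝ) :=
  {f | (∀ x, 0 ≤ f x) ∧ ∀ ⦃x y : P⦄, x ≤ y → f x ≤ f y}

/-- The conical hull of a finite family of vectors: all nonnegative linear combinations. -/
def coneHull {E : Type*} [AddCommMonoid E] [Module ℝ E] {q : ℕ} (w : Fin q → E) : Set E :=
  {f | ∃ c : Fin q → ℝ, (∀ i, 0 ≤ c i) ∧ f = ∑ i, c i • w i}

/-- `T` admits an ND factorization with `r` terms. -/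
def HasNDFact {P₁ P₂ : Type*} [PartialOrder P₁] [PartialOrder P₂]
    (T : P₁ → P₂ → ℝ) (r : ℕ) : Prop :=
  ∃ (a : Fin r → P₁ → ℝ) (b : Fin r → P₂ → ℝ),
    (∀ i, a i ∈ orderCone P₁) ∧ (∀ i, b i ∈ orderCone P₂) ∧
    ∀ x y, T x y = ∑ i, a i x * b i y

/-- `S` admits a nonnegative factorization with `r` terms. -/
def HasNNFact {I₁ I₂ : Type*} (S : I₁ → I₂ → ℝ) (r : ℕ) : Prop :=
  ∃ (u : Fin r → I₁ → ℝ) (w : Fin r → I₂ → ℝ),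
    (∀ i x, 0 ≤ u i x) ∧ (∀ i y, 0 ≤ w i y) ∧
    ∀ x y, S x y = ∑ i, u i x * w i y

/-- The nonnegative rank of a matrix. -/
noncomputable def nnRank {I₁ I₂ : Type*} (S : I₁ → I₂ → ℝ) : ℕ :=
  sInf {r : ℕ | HasNNFact S r}

lemma dite_sum_pad {M : Type*} [AddCommMonoid M] {r₀ r : ℕ} (h : r₀ ≤ r) (f : Fin r₀ → M) :
    (∑ i : Fin r, if hi : (i : ℕ) < r₀ then f ⟨i, hi⟩ else 0) = ∑ i, f i := by
  rw [Fin.sum_univ_eq_sum_range (fun i => if hi : i < r₀ then f ⟨i, hi⟩ else 0) r,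
    ← Finset.sum_subset (Finset.range_subset_range.2 h)
      (by intro x _ hx; simp [Finset.mem_range] at hx; simp [hx]),
    ← Fin.sum_univ_eq_sum_range (fun i => if hi : i < r₀ then f ⟨i, hi⟩ else 0) r₀]
  exact Finset.sum_congr rfl fun i _ => by simp [i.isLt]

lemma zero_mem_orderCone (P : Type*) [PartialOrder P] : (0 : P → ℝ) ∈ orderCone P :=
  ⟨fun _ => le_refl 0, fun _ _ _ => le_refl 0⟩

lemma hasNDFact_mono {P₁ P₂ : Type*} [PartialOrder P₁] [PartialOrder P₂]
    {T : P₁ → P₂ → ℝ} {r₀ r : ℕ} (h : HasNDFact T r₀) (hr : r₀ ≤ r) : HasNDFact T r := by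
  obtain ⟨a, b, ha, hb, hfac⟩ := h
  refine ⟨fun i => if hi : (i : ℕ) < r₀ then a ⟨i, hi⟩ else 0,
    fun i => if hi : (i : ℕ) < r₀ then b ⟨i, hi⟩ else 0, ?_, ?_, ?_⟩
  · intro i; dsimp only; split
    · exact ha _
    · exact zero_mem_orderCone P₁
  · intro i; dsimp only; split
    · exact hb _
    · exact zero_mem_orderCone P₂
  · intro x y
    rw [hfac x y, ← dite_sum_pad hr (fun i => a i x * b i y)]
    refine Finset.sum_congr rfl fun i _ => ?_
    by_cases hi : (i : ℕ) < r₀ <;> simp [hi]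

lemma hasNNFact_mono {I₁ I₂ : Type*} {S : I₁ → I₂ → ℝ} {r₀ r : ℕ}
    (h : HasNNFact S r₀) (hr : r₀ ≤ r) : HasNNFact S r := by
  obtain ⟨u, w, hu, hw, hfac⟩ := h
  refine ⟨fun i => if hi : (i : ℕ) < r₀ then u ⟨i, hi⟩ else 0,
    fun i => if hi : (i : ℕ) < r₀ then w ⟨i, hi⟩ else 0, ?_, ?_, ?_⟩
  · intro i x; dsimp only; split
    · exact hu _ _
    · exact le_refl 0
  · intro i y; dsimp only; split
    · exact hw _ _
    · exact le_refl 0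
  · intro x y
    rw [hfac x y, ← dite_sum_pad hr (fun i => u i x * w i y)]
    refine Finset.sum_congr rfl fun i _ => ?_
    by_cases hi : (i : ℕ) < r₀ <;> simp [hi]

lemma hasNNFact_trivial {q₁ : ℕ} {I₂ : Type*} (S : Fin q₁ → I₂ → ℝ)
    (hS : ∀ i j, 0 ≤ S i j) : HasNNFact S q₁ := by
  refine ⟨fun k x => if x = k then 1 else 0, fun k y => S k y, ?_, ?_, ?_⟩
  · intro i x; dsimp only; split <;> norm_num
  · intro i y; exact hS _ _
  · intro x y
    rw [Finset.sum_eq_single x]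
    · simp
    · intro b _ hb
      simp only
      rw [if_neg fun h => hb h.symm, zero_mul]
    · intro h
      exact absurd (Finset.mem_univ x) h

lemma key_iff {P₁ P₂ : Type*} [Fintype P₁] [Fintype P₂] [PartialOrder P₁] [PartialOrder P₂]
    {q₁ q₂ : ℕ} {v₁ : Fin q₁ → P₁ → ℝ} {v₂ : Fin q₂ → P₂ → ℝ}
    (hv₁ : orderCone P₁ = coneHull v₁) (hv₂ : orderCone P₂ = coneHull v₂)
    (T : P₁ → P₂ → ℝ) (r : ℕ) :
    HasNDFact T r ↔
      ∃ H : Fin q₁ → Fin q₂ → ℝ, (∀ i j, 0 ≤ H i j) ∧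
        (∀ x y, T x y = ∑ i, ∑ j, v₁ i x * H i j * v₂ j y) ∧ nnRank H ≤ r := by
  constructor
  · rintro ⟨a, b, ha, hb, hfac⟩
    have ha' : ∀ k, a k ∈ coneHull v₁ := fun k => hv₁ ▸ ha k
    have hb' : ∀ k, b k ∈ coneHull v₂ := fun k => hv₂ ▸ hb k
    choose c hc hac using ha'
    choose d hd hbd using hb'
    refine ⟨fun i j => ∑ k, c k i * d k j,
      fun i j => Finset.sum_nonneg fun k _ => mul_nonneg (hc k i) (hd k j), ?_, ?_⟩
    · intro x y
      have hax : ∀ k, a k x = ∑ i, c k i * v₁ i x := fun k => by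
        rw [hac k]; simp [Finset.sum_apply]
      have hbx : ∀ k, b k y = ∑ j, d k j * v₂ j y := fun k => by
        rw [hbd k]; simp [Finset.sum_apply]
      rw [hfac x y]
      calc ∑ k, a k x * b k y
          = ∑ k, ∑ i, ∑ j, (c k i * v₁ i x) * (d k j * v₂ j y) := by
            refine Finset.sum_congr rfl fun k _ => ?_
            rw [hax k, hbx k, Finset.sum_mul_sum]
        _ = ∑ i, ∑ k, ∑ j, (c k i * v₁ i x) * (d k j * v₂ j y) := Finset.sum_comm
        _ = ∑ i, ∑ j, v₁ i x * (∑ k, c k i * d k j) * v₂ j y := by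
            refine Finset.sum_congr rfl fun i _ => ?_
            rw [Finset.sum_comm]
            refine Finset.sum_congr rfl fun j _ => ?_
            rw [Finset.mul_sum, Finset.sum_mul]
            exact Finset.sum_congr rfl fun k _ => by ring
    · exact Nat.sInf_le ⟨c, d, hc, hd, fun i j => rfl⟩
  · rintro ⟨H, hH, hTH, hrank⟩
    have hne : {n | HasNNFact H n}.Nonempty := ⟨q₁, hasNNFact_trivial H hH⟩
    have hmem : HasNNFact H (nnRank H) := Nat.sInf_mem hne
    obtain ⟨u, w, hu, hw, hfac⟩ := hasNNFact_mono hmem hrank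
    refine ⟨fun k x => ∑ i, u k i * v₁ i x, fun k y => ∑ j, w k j * v₂ j y, ?_, ?_, ?_⟩
    · intro k
      rw [hv₁]
      exact ⟨u k, hu k, by funext x; simp [Finset.sum_apply]⟩
    · intro k
      rw [hv₂]
      exact ⟨w k, hw k, by funext y; simp [Finset.sum_apply]⟩
    · intro x y
      rw [hTH x y]
      calc ∑ i, ∑ j, v₁ i x * H i j * v₂ j y
          = ∑ i, ∑ j, ∑ k, (u k i * v₁ i x) * (w k j * v₂ j y) := by
            refine Finset.sum_congr rfl fun i _ => Finset.sum_congr rfl fun j _ => ?_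
            rw [hfac i j, Finset.mul_sum, Finset.sum_mul]
            exact Finset.sum_congr rfl fun k _ => by ring
        _ = ∑ i, ∑ k, ∑ j, (u k i * v₁ i x) * (w k j * v₂ j y) := by
            exact Finset.sum_congr rfl fun i _ => Finset.sum_comm
        _ = ∑ k, ∑ i, ∑ j, (u k i * v₁ i x) * (w k j * v₂ j y) := Finset.sum_comm
        _ = ∑ k, (∑ i, u k i * v₁ i x) * ∑ j, w k j * v₂ j y := by
            exact Finset.sum_congr rfl fun k _ => (Finset.sum_mul_sum _ _ _ _).symm

/-- if the columns of `V_j` conically generate `C(P_j)`, then a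
finite-ND-rank matrix `T` has an ND factorization with `r` terms iff `T = V₁ H V₂ᵀ` for
some entrywise-nonnegative `H` of nonnegative rank at most `r`; hence the ND rank of `T`
is the minimum of `rank₊(H)` over all such tri-factorizations. -/
theorem NDrank_eq_min_nnRank_trifactorization
    (P₁ P₂ : Type*) [Fintype P₁] [Fintype P₂] [PartialOrder P₁] [PartialOrder P₂]
    (q₁ q₂ : ℕ) (v₁ : Fin q₁ → P₁ → ℝ) (v₂ : Fin q₂ → P₂ → ℝ)
    (hv₁ : orderCone P₁ = coneHull v₁) (hv₂ : orderCone P₂ = coneHull v₂)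
    (T : P₁ → P₂ → ℝ) (m : ℕ) (hT : HasNDFact T m) :
    (∀ r : ℕ, HasNDFact T r ↔
      ∃ H : Fin q₁ → Fin q₂ → ℝ, (∀ i j, 0 ≤ H i j) ∧
        (∀ x y, T x y = ∑ i, ∑ j, v₁ i x * H i j * v₂ j y) ∧ nnRank H ≤ r) ∧
    sInf {r : ℕ | HasNDFact T r} =
      sInf {n : ℕ | ∃ H : Fin q₁ → Fin q₂ → ℝ, (∀ i j, 0 ≤ H i j) ∧
        (∀ x y, T x y = ∑ i, ∑ j, v₁ i x * H i j * v₂ j y) ∧ nnRank H = n} := by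
  refine ⟨fun r => key_iff hv₁ hv₂ T r, ?_⟩
  have hAne : {r : ℕ | HasNDFact T r}.Nonempty := ⟨m, hT⟩
  have hmemA : HasNDFact T (sInf {r : ℕ | HasNDFact T r}) := Nat.sInf_mem hAne
  obtain ⟨H, hH, hTH, hrank⟩ := (key_iff hv₁ hv₂ T _).1 hmemA
  have hBne : {n : ℕ | ∃ H : Fin q₁ → Fin q₂ → ℝ, (∀ i j, 0 ≤ H i j) ∧
      (∀ x y, T x y = ∑ i, ∑ j, v₁ i x * H i j * v₂ j y) ∧ nnRank H = n}.Nonempty :=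
    ⟨nnRank H, H, hH, hTH, rfl⟩
  apply le_antisymm
  · obtain ⟨H', hH', hTH', hr'⟩ := Nat.sInf_mem hBne
    exact Nat.sInf_le ((key_iff hv₁ hv₂ T _).2 ⟨H', hH', hTH', le_of_eq hr'⟩)
  · exact le_trans (Nat.sInf_le ⟨H, hH, hTH, rfl⟩) hrank
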